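/- arXiv:1401.4797 — 4 statements merged into one kernel-verified Lean document; each statement's English description precedes it below -/
import Mathlib

section
/- Let α, β ∈ ℂ be the two roots of x² − (1+i)x + 1, i.e. complex numbers satisfying α + β = 1 + i and αβ = 1, where i denotes the imaginary unit. Then the complex conjugate of β has minimal polynomial x⁴ − 2x³ + 4x² − 2x + 1 over ℚ. -/
/-!
The quartic is the product `(x² − (1+i)x + 1)(x² − (1−i)x + 1)` of the quadratic of `β` and its
conjugate, so it has rational coefficients and vanishes at `β`. Complex conjugation is a
`ℚ`-algebra automorphism, so `β` and `conj β` share their minimal polynomial; it remains to see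
that the quartic is irreducible, which holds by Eisenstein's criterion at `2` after the shift
`x ↦ x + 1`, giving `x⁴ + 2x³ + 4x² + 4x + 2`, and Gauss's lemma.
-/

open Polynomial

namespace Polynomial

theorem irreducible_comp_X_add_C_iff {R : Type*} [CommRing R] (p : R[X]) (a : R) :
    Irreducible (p.comp (X + C a)) ↔ Irreducible p :=
  MulEquiv.irreducible_iff (algEquivAevalXAddC a).toMulEquiv

end Polynomial

noncomputable def quartic (R : Type*) [CommRing R] : R[X] :=
  X ^ 4 - 2 * X ^ 3 + 4 * X ^ 2 - 2 * X + 1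

theorem quartic_monic (R : Type*) [CommRing R] [Nontrivial R] : (quartic R).Monic := by
  unfold quartic; monicity!

theorem map_quartic {R S : Type*} [CommRing R] [CommRing S] (f : R →+* S) :
    (quartic R).map f = quartic S := by
  simp [quartic]

theorem quartic_comp_X_add_one :
    (quartic ℤ).comp (X + C 1) = X ^ 4 + 2 * X ^ 3 + 4 * X ^ 2 + 4 * X + 2 := by
  simp only [quartic, sub_comp, add_comp, mul_comp, pow_comp, X_comp, one_comp, ofNat_comp,
    C_1]
  ring

theorem irreducible_shifted_quartic :
    Irreducible (X ^ 4 + 2 * X ^ 3 + 4 * X ^ 2 + 4 * X + 2 : ℤ[X]) := by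
  have hmon : (X ^ 4 + 2 * X ^ 3 + 4 * X ^ 2 + 4 * X + 2 : ℤ[X]).Monic := by monicity!
  have hdeg : (X ^ 4 + 2 * X ^ 3 + 4 * X ^ 2 + 4 * X + 2 : ℤ[X]).degree = 4 := by
    compute_degree!
  have hprime : (Ideal.span {(2 : ℤ)}).IsPrime :=
    (Ideal.span_singleton_prime two_ne_zero).mpr Int.prime_two
  refine irreducible_of_eisenstein_criterion hprime ?_ ?_ ?_ ?_ hmon.isPrimitive
  · rw [hmon.leadingCoeff, Ideal.mem_span_singleton]; norm_num
  · intro n hn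
    rw [hdeg, Nat.cast_lt_ofNat] at hn
    rw [Ideal.mem_span_singleton]
    interval_cases n <;> norm_num [coeff_X]
  · rw [hdeg]; norm_num
  · rw [Ideal.span_singleton_pow, Ideal.mem_span_singleton]; simp

theorem irreducible_quartic_int : Irreducible (quartic ℤ) := by
  rw [← irreducible_comp_X_add_C_iff _ 1, quartic_comp_X_add_one]
  exact irreducible_shifted_quartic

theorem irreducible_quartic_rat : Irreducible (quartic ℚ) := by
  rw [← map_quartic (algebraMap ℤ ℚ)]
  exact (quartic_monic ℤ).irreducible_iff_irreducible_map_fraction_map.mp irreducible_quartic_int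

theorem aeval_quartic_eq_mul (z : ℂ) : aeval z (quartic ℚ) =
    (z ^ 2 - (1 + Complex.I) * z + 1) * (z ^ 2 - (1 - Complex.I) * z + 1) := by
  simp only [quartic, map_add, map_sub, map_mul, map_pow, map_one, aeval_X, map_ofNat]
  linear_combination z ^ 2 * Complex.I_sq

theorem minpoly_eq_quartic {z : ℂ} (hz : z ^ 2 - (1 + Complex.I) * z + 1 = 0) :
    minpoly ℚ z = quartic ℚ :=
  (minpoly.eq_of_irreducible_of_monic irreducible_quartic_rat
    (by rw [aeval_quartic_eq_mul, hz, zero_mul]) (quartic_monic ℚ)).symm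

theorem minpoly_conj_beta (α β : ℂ)
    (hsum : α + β = 1 + Complex.I) (hprod : α * β = 1) :
    minpoly ℚ ((starRingEnd ℂ) β) = X ^ 4 - 2 * X ^ 3 + 4 * X ^ 2 - 2 * X + 1 := by
  have hβ : β ^ 2 - (1 + Complex.I) * β + 1 = 0 := by
    linear_combination β * hsum - hprod
  calc minpoly ℚ ((starRingEnd ℂ) β)
      = minpoly ℚ (Complex.conjAe.restrictScalars ℚ β) := rfl
    _ = minpoly ℚ β := minpoly.algEquiv_eq _ β
    _ = quartic ℚ := minpoly_eq_quartic hβ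
end

section
/- Let α, β ∈ ℂ be complex numbers satisfying α + β = 1 + i and αβ = 1, where i denotes the imaginary unit. Then |α·conj(β)| = 1, but α·conj(β) is not a root of unity: for every natural number n ≥ 1, (α·conj(β))ⁿ ≠ 1. -/
/-!
Put `z = α * conj β`. Then `‖z‖ = ‖α * β‖ = 1`, and polarization gives
`z + conj z = (‖α + β‖² - ‖α - β‖²) / 2 = 1 - √5`, because `(α - β)² = (α + β)² - 4αβ = 2i - 4`.
Hence `z ^ n + conj z ^ n = Dₙ(1 - √5)` for the Dickson polynomial `Dₙ ∈ ℤ[X]`. If `z ^ n = 1`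
this value is `2`, and the Galois conjugation `√5 ↦ -√5` of `ℤ[√5]` gives `Dₙ(1 + √5) = 2`.
But `1 + √5 = x + x⁻¹` with a real `x > 1`, so `Dₙ(1 + √5) = xⁿ + x⁻ⁿ > 2`.
-/

open Polynomial Complex ComplexConjugate

theorem aeval_add_mul_eq_intCast_of_aeval_sub_mul {R : Type*} [CommRing R] [CharZero R] {d : ℤ}
    (hd : ∀ n : ℤ, d ≠ n * n) {s : R} (hs : s * s = d) {p : ℤ[X]} {a b k : ℤ}
    (h : aeval (a - b * s) p = k) : aeval (a + b * s) p = k := by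
  let x : ℤ√d := ⟨a, b⟩
  have hlift (t : {t : R // t * t = d}) :
      aeval (a + b * (t : R)) p = Zsqrtd.lift t (aeval x p) :=
    aeval_algHom_apply (Zsqrtd.lift t).toIntAlgHom x p
  have hx : aeval x p = k := by
    apply Zsqrtd.lift_injective ⟨-s, by rw [neg_mul_neg, hs]⟩ hd
    rw [← hlift, mul_neg, ← sub_eq_add_neg, h, map_intCast]
  rw [hlift ⟨s, hs⟩, hx, map_intCast]

theorem five_ne_mul_self (m : ℤ) : (5 : ℤ) ≠ m * m := by
  intro hm
  have : m ≤ 2 := by nlinarith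
  have : -2 ≤ m := by nlinarith
  interval_cases m <;> omega

theorem aeval_one_add_sqrt_five_eq_intCast {p : ℤ[X]} {k : ℤ}
    (h : aeval (1 - Real.sqrt 5) p = k) : aeval (1 + Real.sqrt 5) p = k := by
  have hs : Real.sqrt 5 * Real.sqrt 5 = ((5 : ℤ) : ℝ) := by
    push_cast
    exact Real.mul_self_sqrt (by norm_num)
  simpa using aeval_add_mul_eq_intCast_of_aeval_sub_mul (a := 1) (b := 1) five_ne_mul_self hs
    (by simpa using h)

theorem aeval_dickson_one_one {R : Type*} [CommRing R] (x : R) (n : ℕ) :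
    aeval x (dickson 1 (1 : ℤ) n) = (dickson 1 (1 : R) n).eval x := by
  rw [aeval_def, eval₂_eq_eval_map, map_dickson, map_one]

theorem two_lt_pow_add_pow {R : Type*} [CommRing R] [LinearOrder R] [IsStrictOrderedRing R]
    {x y : R} (hx : 1 < x) (hy : 0 < y) (hxy : x * y = 1) {n : ℕ} (hn : n ≠ 0) :
    2 < x ^ n + y ^ n := by
  have hxn : 1 < x ^ n := one_lt_pow₀ hx hn
  have hyn : 0 < y ^ n := pow_pos hy n
  have hxyn : x ^ n * y ^ n = 1 := by rw [← mul_pow, hxy, one_pow]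
  nlinarith

theorem exists_one_lt_mul_eq_one_add_eq {c : ℝ} (hc : 2 < c) :
    ∃ x y : ℝ, 1 < x ∧ 0 < y ∧ x * y = 1 ∧ x + y = c := by
  set r := Real.sqrt (c ^ 2 - 4)
  have hr : r ^ 2 = c ^ 2 - 4 := Real.sq_sqrt (by nlinarith)
  have hr0 : 0 ≤ r := Real.sqrt_nonneg _
  refine ⟨(c + r) / 2, (c - r) / 2, by linarith, ?_, by linear_combination -hr / 4, by ring⟩
  nlinarith

theorem two_lt_aeval_dickson_one_one {c : ℝ} (hc : 2 < c) {n : ℕ} (hn : n ≠ 0) :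
    2 < aeval c (dickson 1 (1 : ℤ) n) := by
  obtain ⟨x, y, hx, hy, hxy, rfl⟩ := exists_one_lt_mul_eq_one_add_eq hc
  rw [aeval_dickson_one_one, dickson_one_one_eval_add_inv x y hxy]
  exact two_lt_pow_add_pow hx hy hxy hn

theorem norm_mul_conj_eq_one {α β : ℂ} (hprod : α * β = 1) : ‖α * conj β‖ = 1 := by
  rw [norm_mul, norm_conj, ← norm_mul, hprod, norm_one]

theorem mul_conj_mul_conj_eq_one {α β : ℂ} (hprod : α * β = 1) :
    α * conj β * conj (α * conj β) = 1 := by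
  rw [mul_conj, normSq_eq_norm_sq, norm_mul_conj_eq_one hprod]
  norm_num

theorem normSq_sub_eq_two_mul_sqrt_five {α β : ℂ} (hsum : α + β = 1 + I) (hprod : α * β = 1) :
    normSq (α - β) = 2 * Real.sqrt 5 := by
  have hsq : (α - β) ^ 2 = -4 + 2 * I := by
    linear_combination (α + β + 1 + I) * hsum - 4 * hprod + I_sq
  have h20 : normSq (α - β) ^ 2 = 20 := by
    rw [← map_pow, hsq, normSq_apply]
    norm_num
  rw [← Real.sqrt_sq (normSq_nonneg _), h20, show (20 : ℝ) = 2 ^ 2 * 5 by norm_num,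
    Real.sqrt_mul (by norm_num), Real.sqrt_sq (by norm_num)]

theorem mul_conj_add_conj_eq_one_sub_sqrt_five {α β : ℂ} (hsum : α + β = 1 + I)
    (hprod : α * β = 1) :
    α * conj β + conj (α * conj β) = ((1 - Real.sqrt 5 : ℝ) : ℂ) := by
  have hpolar : 4 * (α * conj β).re = normSq (α + β) - normSq (α - β) := by
    rw [normSq_add, normSq_sub]
    ring
  have hplus : normSq (α + β) = 2 := by
    rw [hsum, normSq_apply]
    norm_num
  rw [normSq_sub_eq_two_mul_sqrt_five hsum hprod, hplus] at hpolar
  rw [add_conj]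
  congr 1
  linarith

theorem not_root_of_unity (α β : ℂ)
    (hsum : α + β = 1 + Complex.I) (hprod : α * β = 1) :
    ‖α * starRingEnd ℂ β‖ = 1 ∧
    ∀ n : ℕ, 1 ≤ n → (α * starRingEnd ℂ β) ^ n ≠ 1 := by
  refine ⟨norm_mul_conj_eq_one hprod, fun n hn hzn => ?_⟩
  set z := α * conj β
  have hminus : aeval (1 - Real.sqrt 5) (dickson 1 (1 : ℤ) n) = (2 : ℤ) := by
    have := dickson_one_one_eval_add_inv z (conj z) (mul_conj_mul_conj_eq_one hprod) n
    rw [← map_pow, hzn, map_one, mul_conj_add_conj_eq_one_sub_sqrt_five hsum hprod,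
      ← aeval_dickson_one_one, ← Complex.coe_algebraMap, aeval_algebraMap_apply,
      Complex.coe_algebraMap, one_add_one_eq_two] at this
    exact_mod_cast this
  have hplus := aeval_one_add_sqrt_five_eq_intCast hminus
  have hc : 2 < 1 + Real.sqrt 5 := by
    have : 1 < Real.sqrt 5 := Real.lt_sqrt (by norm_num) |>.mpr (by norm_num)
    linarith
  exact_mod_cast (two_lt_aeval_dickson_one_one hc (by omega)).ne' hplus
end

section
/- Let α, β ∈ ℂ be complex numbers satisfying α + β = 1 + i and αβ = 1, where i denotes the imaginary unit, and for j = 0, 1, 2, 3 set v_j = (α^j, conj(β)^j) ∈ ℂ × ℂ. Then the four vectors v₀, v₁, v₂, v₃ are linearly independent over ℝ, where ℂ × ℂ is regarded as a real vector space. -/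
open Polynomial Complex

theorem lattice_vectors_linearIndependent (α β : ℂ)
    (hsum : α + β = 1 + Complex.I) (hprod : α * β = 1) :
    LinearIndependent ℝ
      (fun j : Fin 4 => ((α ^ (j : ℕ), (starRingEnd ℂ β) ^ (j : ℕ)) : ℂ × ℂ)) := by
  -- basic facts
  have hsumim : α.im + β.im = 1 := by
    have := congrArg Complex.im hsum; simpa using this
  have hprodim : α.re * β.im + α.im * β.re = 0 := by
    have := congrArg Complex.im hprod; simpa [Complex.mul_im] using this
  have hαim : α.im ≠ 0 := by
    intro h
    have hβ : β.im = 1 := by linarith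
    have : α.re = 0 := by
      rw [h, hβ] at hprodim; linarith
    have hα0 : α = 0 := Complex.ext this h
    rw [hα0] at hprod; simp at hprod
  have hβim : β.im ≠ 0 := by
    intro h
    have hα : α.im = 1 := by linarith
    have : β.re = 0 := by
      rw [h, hα] at hprodim; linarith
    have hβ0 : β = 0 := Complex.ext this h
    rw [hβ0] at hprod; simp at hprod
  have hαβ : α ≠ β := by
    intro h
    have h2 : ((1 : ℂ) + Complex.I) ^ 2 - 4 = 0 := by
      rw [← hsum]; linear_combination (4:ℂ) * hprod + h * (α + β) - h * (2*β)
    have := congrArg Complex.im h2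
    simp [Complex.add_im, Complex.mul_im, pow_two] at this
  have hαconjβ : α ≠ (starRingEnd ℂ) β := by
    intro h
    have : (α + β).im = 0 := by
      rw [h]; simp
    rw [hsum] at this; simp at this
  -- main argument
  rw [Fintype.linearIndependent_iff]
  intro g hg j
  have hg1 := congrArg Prod.fst hg
  have hg2 := congrArg Prod.snd hg
  simp only [Fin.sum_univ_four, Prod.smul_mk, Prod.fst_add, Prod.snd_add, Prod.fst_zero,
    Prod.snd_zero, Fin.isValue, Prod.mk_add_mk] at hg1 hg2
  have e1 : (g 0 : ℂ) + g 1 * α + g 2 * α ^ 2 + g 3 * α ^ 3 = 0 := by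
    simpa [Complex.real_smul] using hg1
  have e2 : (g 0 : ℂ) + g 1 * (starRingEnd ℂ β) + g 2 * (starRingEnd ℂ β) ^ 2
      + g 3 * (starRingEnd ℂ β) ^ 3 = 0 := by
    simpa [Complex.real_smul] using hg2
  have e3 : (g 0 : ℂ) + g 1 * (starRingEnd ℂ α) + g 2 * (starRingEnd ℂ α) ^ 2
      + g 3 * (starRingEnd ℂ α) ^ 3 = 0 := by
    have := congrArg (starRingEnd ℂ) e1
    simpa [map_add, map_mul, map_pow, Complex.conj_ofReal] using this
  have e4 : (g 0 : ℂ) + g 1 * β + g 2 * β ^ 2 + g 3 * β ^ 3 = 0 := by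
    have := congrArg (starRingEnd ℂ) e2
    simpa [map_add, map_mul, map_pow, Complex.conj_ofReal] using this
  set p : ℂ[X] := C (g 0 : ℂ) + C (g 1 : ℂ) * X + C (g 2 : ℂ) * X ^ 2 + C (g 3 : ℂ) * X ^ 3
    with hp
  have heval : ∀ x ∈ ({α, (starRingEnd ℂ) α, β, (starRingEnd ℂ) β} : Finset ℂ),
      p.eval x = 0 := by
    intro x hx
    simp only [Finset.mem_insert, Finset.mem_singleton] at hx
    rcases hx with rfl | rfl | rfl | rfl <;>
      simp only [hp, eval_add, eval_mul, eval_pow, eval_C, eval_X] <;>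
      [exact e1; exact e3; exact e4; exact e2]
  have hcard : ({α, (starRingEnd ℂ) α, β, (starRingEnd ℂ) β} : Finset ℂ).card = 4 := by
    have h1 : α ≠ (starRingEnd ℂ) α := by
      intro h; exact hαim (Complex.conj_eq_iff_im.mp h.symm)
    have h2 : β ≠ (starRingEnd ℂ) β := by
      intro h; exact hβim (Complex.conj_eq_iff_im.mp h.symm)
    have h3 : (starRingEnd ℂ) α ≠ β := by
      intro h
      exact hαconjβ (by rw [← h]; simp)
    have h4 : (starRingEnd ℂ) α ≠ (starRingEnd ℂ) β := fun h => hαβ (starRingEnd ℂ |>.injective h)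
    rw [Finset.card_insert_of_notMem (by simp [h1, hαβ, hαconjβ]),
      Finset.card_insert_of_notMem (by simp [h3, h4]),
      Finset.card_insert_of_notMem (by simp [h2])]
    simp
  have hdeg : p.natDegree ≤ 3 := by
    simp only [hp]
    compute_degree
  have hp0 : p = 0 := by
    apply p.eq_zero_of_natDegree_lt_card_of_eval_eq_zero' _ heval
    rw [hcard]; omega
  have hcoeff : ∀ k : ℕ, p.coeff k = 0 := by
    intro k; rw [hp0]; simp
  fin_cases j
  · have := hcoeff 0
    simp only [hp, coeff_add, coeff_C_mul, coeff_C, coeff_X_pow, coeff_X_zero, mul_zero,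
      mul_one, mul_ite] at this
    norm_num at this
    exact_mod_cast this
  · have := hcoeff 1
    simp only [hp, coeff_add, coeff_C_mul, coeff_C, coeff_X_pow, coeff_X_one, mul_zero,
      mul_one, mul_ite] at this
    norm_num at this
    exact_mod_cast this
  · have := hcoeff 2
    simp only [hp, coeff_add, coeff_C_mul, coeff_C, coeff_X_pow, mul_zero,
      mul_one, mul_ite, coeff_X] at this
    norm_num at this
    exact_mod_cast this
  · have := hcoeff 3
    simp only [hp, coeff_add, coeff_C_mul, coeff_C, coeff_X_pow, mul_zero,
      mul_one, mul_ite, coeff_X] at this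
    norm_num at this
    exact_mod_cast this
end

section
/- Let α, β ∈ ℂ be complex numbers satisfying α + β = 1 + i and αβ = 1, where i denotes the imaginary unit, for j = 0, 1, 2, 3 set v_j = (α^j, conj(β)^j) ∈ ℂ × ℂ, and let Λ be the additive subgroup of ℂ × ℂ generated by v₀, v₁, v₂, v₃. Then the ℂ-linear map T : ℂ × ℂ → ℂ × ℂ defined by T(x, y) = (α·x, conj(β)·y) maps Λ onto itself: the image T(Λ) equals Λ. -/
/-! Both `α` and `conj β` are roots of `x⁴ - 2x³ + 4x² - 2x + 1 = (x² - (1 + i)x + 1)(x² - (1 - i)x + 1)`,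
so `t = (α, conj β)` is a root of it in the ring `ℂ × ℂ`; then `v j = t ^ j` and `T` is multiplication
by `t`. As the quartic is monic over `ℤ`, `tΛ ⊆ Λ`; as its constant term is `1`, `t` has the inverse
`2 - 4t + 2t² - t³`, which also maps `Λ` into itself. -/

open Complex

namespace AddSubgroup

variable {R : Type*} [Ring R] {s : Set R}

theorem mul_mem_closure_of_forall_mem {a : R} (ha : ∀ x ∈ s, a * x ∈ closure s) {x : R}
    (hx : x ∈ closure s) : a * x ∈ closure s :=
  (closure_le (K := (closure s).comap (AddMonoidHom.mulLeft a))).2 ha hx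

theorem image_mul_left_closure_eq {a b : R} (hab : a * b = 1)
    (ha : ∀ x ∈ s, a * x ∈ closure s) (hb : ∀ x ∈ s, b * x ∈ closure s) :
    (a * ·) '' (closure s : Set R) = closure s := by
  refine Set.Subset.antisymm ?_ fun x hx ↦
    ⟨b * x, mul_mem_closure_of_forall_mem hb hx, by simp only [← mul_assoc, hab, one_mul]⟩
  rintro _ ⟨x, hx, rfl⟩
  exact mul_mem_closure_of_forall_mem ha hx

end AddSubgroup

section Quartic

open AddSubgroup

variable {R : Type*} [CommRing R] {t : R}

theorem pow_mem_closure_pow {n : ℕ} (hn : n < 4) :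
    t ^ n ∈ closure (Set.range fun j : Fin 4 ↦ t ^ (j : ℕ)) :=
  subset_closure ⟨⟨n, hn⟩, rfl⟩

theorem intCast_add_mul_mem_closure_pow (a b c d : ℤ) :
    (a : R) + b * t + c * t ^ 2 + d * t ^ 3 ∈ closure (Set.range fun j : Fin 4 ↦ t ^ (j : ℕ)) :=
  mem_closure_range_iff_of_fintype.2 ⟨![a, b, c, d], by simp [Fin.sum_univ_four, zsmul_eq_mul]⟩

theorem mul_pow_mem_closure_pow (ht : t ^ 4 - 2 * t ^ 3 + 4 * t ^ 2 - 2 * t + 1 = 0)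
    {n : ℕ} (hn : n < 4) : t * t ^ n ∈ closure (Set.range fun j : Fin 4 ↦ t ^ (j : ℕ)) := by
  rcases (show n < 3 ∨ n = 3 by omega) with hn | rfl
  · rw [← pow_succ']
    exact pow_mem_closure_pow (by omega)
  · convert intCast_add_mul_mem_closure_pow (t := t) (-1) 2 (-4) 2 using 1
    linear_combination ht

theorem inv_mul_pow_mem_closure_pow (ht : t ^ 4 - 2 * t ^ 3 + 4 * t ^ 2 - 2 * t + 1 = 0)
    {n : ℕ} (hn : n < 4) : (2 - 4 * t + 2 * t ^ 2 - t ^ 3) * t ^ n ∈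
      closure (Set.range fun j : Fin 4 ↦ t ^ (j : ℕ)) := by
  rcases n with _ | n
  · convert intCast_add_mul_mem_closure_pow (t := t) 2 (-4) 2 (-1) using 1
    ring
  · convert pow_mem_closure_pow (t := t) (n := n) (by omega) using 1
    linear_combination -t ^ n * ht

theorem image_mul_closure_pow_eq (ht : t ^ 4 - 2 * t ^ 3 + 4 * t ^ 2 - 2 * t + 1 = 0) :
    (t * ·) '' (closure (Set.range fun j : Fin 4 ↦ t ^ (j : ℕ)) : Set R) =
      closure (Set.range fun j : Fin 4 ↦ t ^ (j : ℕ)) := by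
  refine image_mul_left_closure_eq (b := 2 - 4 * t + 2 * t ^ 2 - t ^ 3)
    (by linear_combination -ht) ?_ ?_
  · rintro _ ⟨j, rfl⟩
    exact mul_pow_mem_closure_pow ht j.isLt
  · rintro _ ⟨j, rfl⟩
    exact inv_mul_pow_mem_closure_pow ht j.isLt

end Quartic

theorem quartic_eq_zero_of_add_eq_of_mul_eq {α β : ℂ} (hsum : α + β = 1 + I) (hprod : α * β = 1) :
    α ^ 4 - 2 * α ^ 3 + 4 * α ^ 2 - 2 * α + 1 = 0 := by
  have hquad : α ^ 2 - (1 + I) * α + 1 = 0 := by linear_combination α * hsum - hprod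
  linear_combination (α ^ 2 - (1 - I) * α + 1) * hquad + α ^ 2 * I_sq

theorem lattice_invariant (α β : ℂ)
    (hsum : α + β = 1 + Complex.I) (hprod : α * β = 1)
    (v : Fin 4 → ℂ × ℂ)
    (hv : ∀ j : Fin 4, v j = (α ^ (j : ℕ), (starRingEnd ℂ β) ^ (j : ℕ)))
    (Λ : AddSubgroup (ℂ × ℂ)) (hΛ : Λ = AddSubgroup.closure (Set.range v))
    (T : ℂ × ℂ → ℂ × ℂ)
    (hT : ∀ p : ℂ × ℂ, T p = (α * p.1, starRingEnd ℂ β * p.2)) :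
    T '' (Λ : Set (ℂ × ℂ)) = (Λ : Set (ℂ × ℂ)) := by
  set t : ℂ × ℂ := (α, starRingEnd ℂ β)
  have hα := quartic_eq_zero_of_add_eq_of_mul_eq hsum hprod
  have hβ := quartic_eq_zero_of_add_eq_of_mul_eq ((add_comm β α).trans hsum)
    ((mul_comm β α).trans hprod)
  have hconj : starRingEnd ℂ β ^ 4 - 2 * starRingEnd ℂ β ^ 3 + 4 * starRingEnd ℂ β ^ 2
      - 2 * starRingEnd ℂ β + 1 = 0 := by
    simpa only [map_add, map_sub, map_mul, map_pow, map_one, map_zero, map_ofNat]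
      using congrArg (starRingEnd ℂ) hβ
  have ht : t ^ 4 - 2 * t ^ 3 + 4 * t ^ 2 - 2 * t + 1 = 0 := Prod.ext hα hconj
  have hvt : v = fun j : Fin 4 ↦ t ^ (j : ℕ) := funext hv
  have hTt : T = (t * ·) := funext hT
  rw [hΛ, hvt, hTt]
  exact image_mul_closure_pow_eq ht
end
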